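/- arXiv:0912.5477 — 3 statements merged into one kernel-verified Lean document; each statement's English description precedes it below -/
import Mathlib

section
/- Let 0 < q < 1 be real, x ∈ ℝ, n ∈ ℕ. Define [x]_q = (1-q^x)/(1-q), E_{n,q}(x) = (1+q)(1-q)^{-n} ∑_{l=0}^n C(n,l)(-1)^l q^{lx}/(1+q^l), and E_{l,q} = E_{l,q}(0). Then E_{n,q}(x) = ∑_{l=0}^n C(n,l) q^{l x} [x]_q^{n-l} E_{l,q}. -/
/-- The `q`-Euler polynomial `E_{n,q}(x)` for real `0 < q < 1`. -/
noncomputable def qEulerPoly (q : ℝ) (n : ℕ) (x : ℝ) : ℝ :=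
  (1 + q) * ((1 - q) ^ n)⁻¹ *
    ∑ l ∈ Finset.range (n + 1),
      (n.choose l : ℝ) * (-1) ^ l * Real.rpow q ((l : ℝ) * x) / (1 + q ^ l)

/-!
Put `a = q ^ x` and `f m = (-1) ^ m / (1 + q ^ m)`. Once the common factor `(1 + q) (1 - q)⁻ⁿ` is
pulled out, the identity becomes
`∑_l C(n,l) a^l (1-a)^(n-l) ∑_{m ≤ l} C(l,m) f m = ∑_m C(n,m) a^m f m`.
Exchanging the sums and using `C(n,l) C(l,m) = C(n,m) C(n-m,l-m)`, the coefficient of `f m` on the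
left is `C(n,m) a^m (a + (1-a))^(n-m)`.
-/

open Finset

section Binomial

variable {R : Type*} [CommRing R]

theorem sum_choose_mul_choose_mul_pow_mul_one_sub_pow (a : R) {m n : ℕ} (hmn : m ≤ n) :
    ∑ l ∈ range (n + 1), (n.choose l * l.choose m : R) * a ^ l * (1 - a) ^ (n - l)
      = n.choose m * a ^ m := by
  have hsplit : n + 1 = m + (n - m + 1) := by omega
  rw [hsplit, sum_range_add]
  have below : ∑ l ∈ range m, (n.choose l * l.choose m : R) * a ^ l * (1 - a) ^ (n - l) = 0 :=
    sum_eq_zero fun l hl => by simp [Nat.choose_eq_zero_of_lt (mem_range.1 hl)]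
  have shifted : ∀ t ∈ range (n - m + 1),
      (n.choose (m + t) * (m + t).choose m : R) * a ^ (m + t) * (1 - a) ^ (n - (m + t))
        = n.choose m * a ^ m * (a ^ t * (1 - a) ^ (n - m - t) * (n - m).choose t) := by
    intro t _
    have hchoose := Nat.choose_mul (n := n) (k := m + t) (s := m) (Nat.le_add_right m t)
    rw [Nat.add_sub_cancel_left] at hchoose
    rw [show n - (m + t) = n - m - t by omega, pow_add, ← Nat.cast_mul, hchoose, Nat.cast_mul]
    ring
  rw [below, zero_add, sum_congr rfl shifted, ← mul_sum, ← add_pow, add_sub_cancel, one_pow,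
    mul_one]

theorem sum_choose_mul_pow_mul_one_sub_pow_mul_sum_choose (a : R) (f : ℕ → R) (n : ℕ) :
    ∑ l ∈ range (n + 1), n.choose l * a ^ l * (1 - a) ^ (n - l) *
        ∑ m ∈ range (l + 1), l.choose m * f m
      = ∑ m ∈ range (n + 1), n.choose m * a ^ m * f m := by
  have extend : ∀ l ∈ range (n + 1),
      ∑ m ∈ range (l + 1), (l.choose m : R) * f m = ∑ m ∈ range (n + 1), l.choose m * f m := by
    intro l hl
    refine sum_subset (range_subset_range.2 (mem_range.1 hl)) fun m _ hm => ?_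
    simp [Nat.choose_eq_zero_of_lt (not_lt.1 (mt mem_range.2 hm))]
  rw [sum_congr rfl fun l hl => by rw [extend l hl, mul_sum], sum_comm]
  refine sum_congr rfl fun m hm => ?_
  rw [← sum_choose_mul_choose_mul_pow_mul_one_sub_pow a (Nat.lt_succ_iff.1 (mem_range.1 hm)),
    sum_mul]
  exact sum_congr rfl fun l _ => by ring

end Binomial

theorem qEulerPoly_eq_sum {q : ℝ} (hq : 0 ≤ q) (n : ℕ) (x : ℝ) :
    qEulerPoly q n x = (1 + q) * (1 - q)⁻¹ ^ n *
      ∑ l ∈ range (n + 1), n.choose l * (q ^ x) ^ l * ((-1) ^ l / (1 + q ^ l)) := by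
  rw [qEulerPoly, inv_pow]
  congr 1
  refine sum_congr rfl fun l _ => ?_
  rw [Real.rpow_eq_pow, mul_comm (l : ℝ), Real.rpow_mul_natCast hq]
  ring

theorem qEuler_addition_general (q : ℝ) (hq0 : 0 < q) (x : ℝ) (n : ℕ) :
    qEulerPoly q n x
      = ∑ l ∈ Finset.range (n + 1),
          (n.choose l : ℝ) * Real.rpow q ((l : ℝ) * x) *
            ((1 - Real.rpow q x) / (1 - q)) ^ (n - l) * qEulerPoly q l 0 := by
  have hEuler_number : ∀ l, qEulerPoly q l 0 = (1 + q) * (1 - q)⁻¹ ^ l *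
      ∑ m ∈ range (l + 1), l.choose m * ((-1) ^ m / (1 + q ^ m)) := by
    intro l
    simpa using qEulerPoly_eq_sum hq0.le l 0
  rw [qEulerPoly_eq_sum hq0.le, ← sum_choose_mul_pow_mul_one_sub_pow_mul_sum_choose, mul_sum]
  refine sum_congr rfl fun l hl => ?_
  have hpow : (1 - q)⁻¹ ^ (n - l) * (1 - q)⁻¹ ^ l = (1 - q)⁻¹ ^ n :=
    pow_sub_mul_pow _ (Nat.lt_succ_iff.1 (mem_range.1 hl))
  rw [hEuler_number, Real.rpow_eq_pow, Real.rpow_eq_pow, mul_comm (l : ℝ),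
    Real.rpow_mul_natCast hq0.le, div_eq_mul_inv, mul_pow, ← hpow]
  ring

theorem qEuler_addition (q : ℝ) (hq0 : 0 < q) (hq1 : q < 1) (x : ℝ) (n : ℕ) :
    qEulerPoly q n x
      = ∑ l ∈ Finset.range (n + 1),
          (n.choose l : ℝ) * Real.rpow q ((l : ℝ) * x) *
            ((1 - Real.rpow q x) / (1 - q)) ^ (n - l) * qEulerPoly q l 0 :=
  qEuler_addition_general q hq0 x n
end

section
/- Let 0 < q < 1 be real, n ∈ ℕ, r ≥ 1 an integer, f an odd positive integer, x ∈ ℝ. Define E^{(r)}_{n,q}(x) = (1+q)^r (1-q)^{-n} ∑_{l=0}^n C(n,l) (-1)^l q^{l x} (1+q^l)^{-r}. Then the distribution relation holds: E^{(r)}_{n,q}(x) = ((1+q)/(1+q^f))^r [f]_q^n ∑_{a_1,...,a_r=0}^{f-1} (-1)^{a_1+⋯+a_r} E^{(r)}_{n,q^f}((x + a_1 + ⋯ + a_r)/f). -/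
/-!
Shifting the argument by `A = a₁ + ⋯ + aᵣ` multiplies the `l`-th term of `E^{(r)}_{n,q^f}` by
`(-1)^A (q^l)^A`, so after exchanging the sums over `a` and `l` the sum over `a` factors into
`r` copies of the alternating geometric sum `∑_{j<f} (-q^l)^j = (1 + q^{fl}) / (1 + q^l)`
(here `f` odd is essential). This turns the denominator `(1 + q^{fl})^r` back into
`(1 + q^l)^r`; the prefactors only compensate for the change of `q` into `q^f`.
-/

/-- The `q`-Euler polynomial of order `r`, `E^{(r)}_{n,q}(x)`, for real `q`. -/
noncomputable def qEulerHigher (r n : ℕ) (q x : ℝ) : ℝ :=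
  (1 + q) ^ r * ((1 - q) ^ n)⁻¹ *
    ∑ l ∈ Finset.range (n + 1),
      (n.choose l : ℝ) * (-1) ^ l * Real.rpow q ((l : ℝ) * x) * ((1 + q ^ l) ^ r)⁻¹

open Finset

theorem Fintype.sum_pow_sum_fin {R : Type*} [CommSemiring R] (t : R) (r f : ℕ) :
    ∑ a : Fin r → Fin f, t ^ ∑ i, (a i : ℕ) = (∑ j ∈ range f, t ^ j) ^ r := by
  simp only [← prod_pow_eq_pow_sum]
  rw [← Fin.sum_univ_eq_sum_range (t ^ ·), ← Fin.prod_const, Fintype.prod_sum]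

theorem mul_geom_sum_neg_of_odd {R : Type*} [CommRing R] (t : R) {f : ℕ} (hf : Odd f) :
    (1 + t) * ∑ j ∈ range f, (-t) ^ j = 1 + t ^ f := by
  rw [← sub_neg_eq_add, mul_neg_geom_sum, hf.neg_pow, sub_neg_eq_add]

theorem rpow_pow_mul_add_div {q : ℝ} (hq : 0 < q) {f : ℕ} (hf : f ≠ 0) (l A : ℕ) (x : ℝ) :
    (q ^ f) ^ ((l : ℝ) * ((x + A) / f)) = q ^ ((l : ℝ) * x) * (q ^ l) ^ A := by
  have hexp : (f : ℝ) * ((l : ℝ) * ((x + A) / f)) = (l : ℝ) * x + ((l * A : ℕ) : ℝ) := by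
    push_cast; field_simp
  rw [← Real.rpow_natCast q f, ← Real.rpow_mul hq.le, hexp, Real.rpow_add hq,
    Real.rpow_natCast, pow_mul]

theorem one_add_pow_mul_sum_alternating_rpow {q : ℝ} (hq : 0 < q) {f : ℕ} (hf : Odd f)
    (r l : ℕ) (x : ℝ) :
    (1 + q ^ l) ^ r * ∑ a : Fin r → Fin f,
        (-1) ^ (∑ i, (a i : ℕ)) * (q ^ f) ^ ((l : ℝ) * ((x + ∑ i, (a i : ℕ)) / f))
      = (1 + (q ^ f) ^ l) ^ r * q ^ ((l : ℝ) * x) := by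
  have hshift : ∀ A : ℕ, (-1 : ℝ) ^ A * (q ^ f) ^ ((l : ℝ) * ((x + A) / f))
      = q ^ ((l : ℝ) * x) * (-q ^ l) ^ A := fun A => by
    rw [rpow_pow_mul_add_div hq hf.pos.ne' l A x, neg_pow]; ring
  rw [sum_congr rfl fun a _ => hshift (∑ i, (a i : ℕ)), ← mul_sum, Fintype.sum_pow_sum_fin,
    mul_left_comm, ← mul_pow, mul_geom_sum_neg_of_odd _ hf, ← pow_mul, ← pow_mul, mul_comm l,
    mul_comm]

theorem qEuler_distribution_general (q : ℝ) (hq0 : 0 < q) (hq1 : q < 1) (n : ℕ)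
    (r : ℕ) (f : ℕ) (hf : Odd f) (x : ℝ) :
    qEulerHigher r n q x
      = ((1 + q) / (1 + q ^ f)) ^ r * ((1 - q ^ f) / (1 - q)) ^ n *
        ∑ a : Fin r → Fin f,
          (-1) ^ (∑ i, (a i : ℕ)) *
            qEulerHigher r n (q ^ f) ((x + ∑ i, (a i : ℕ)) / f) := by
  have hqf : 1 - q ^ f ≠ 0 := (sub_pos.2 (pow_lt_one₀ hq0.le hq1 hf.pos.ne')).ne'
  have hscalar : ((1 + q) / (1 + q ^ f)) ^ r * ((1 - q ^ f) / (1 - q)) ^ n *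
      ((1 + q ^ f) ^ r * ((1 - q ^ f) ^ n)⁻¹) = (1 + q) ^ r * ((1 - q) ^ n)⁻¹ := by
    have : 1 + q ^ f ≠ 0 := by positivity
    rw [div_pow, div_pow]
    field_simp
  have hterm (l : ℕ) : q ^ ((l : ℝ) * x) * ((1 + q ^ l) ^ r)⁻¹ =
      ((1 + (q ^ f) ^ l) ^ r)⁻¹ * ∑ a : Fin r → Fin f,
        (-1) ^ (∑ i, (a i : ℕ)) * (q ^ f) ^ ((l : ℝ) * ((x + ∑ i, (a i : ℕ)) / f)) := by
    have hB : (1 + q ^ l) ^ r ≠ 0 := by positivity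
    have hC : (1 + (q ^ f) ^ l) ^ r ≠ 0 := by positivity
    rw [eq_comm, inv_mul_eq_iff_eq_mul₀ hC, ← mul_right_inj' hB,
      one_add_pow_mul_sum_alternating_rpow hq0 hf]
    field_simp
  unfold qEulerHigher
  simp only [Real.rpow_eq_pow, mul_assoc, hterm, ← hscalar]
  simp only [mul_sum]
  rw [sum_comm]
  refine sum_congr rfl fun l _ => sum_congr rfl fun a _ => ?_
  ring

theorem qEuler_distribution (q : ℝ) (hq0 : 0 < q) (hq1 : q < 1) (n : ℕ)
    (r : ℕ) (hr : 1 ≤ r) (f : ℕ) (hf : Odd f) (hf1 : 1 ≤ f) (x : ℝ) :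
    qEulerHigher r n q x
      = ((1 + q) / (1 + q ^ f)) ^ r * ((1 - q ^ f) / (1 - q)) ^ n *
        ∑ a : Fin r → Fin f,
          (-1) ^ (∑ i, (a i : ℕ)) *
            qEulerHigher r n (q ^ f) ((x + ∑ i, (a i : ℕ)) / f) :=
  qEuler_distribution_general q hq0 hq1 n r f hf x
end

section
/- Let 0 < q < 1 be real, n ∈ ℕ, x > 0 real, and r ≥ 1 an integer. Then the Abel limit lim_{t→1⁻} ∑_{m=0}^∞ C(m+r-1, m) (-1)^m t^m [m+x]_q^n exists and equals (1-q)^{-n} ∑_{l=0}^n C(n,l) (-1)^l q^{l x} (1+q^l)^{-r}, where [y]_q = (1-q^y)/(1-q). -/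
/-!
Expanding `(1 - q^(m+x))^n` binomially turns the `m`-th term into a finite combination of
`C(m+r-1, m) (-t q^l)^m`, so for `|t| < 1` the series is a finite combination of the negative
binomial series `∑ C(m+r-1, m) z^m = (1 - z)^(-r)` at `z = -t q^l`. The resulting closed form is
a rational function of `t` that is continuous at `t = 1`, which gives the Abel limit.
-/

open Finset Filter Topology

theorem hasSum_choose_add_sub_one_mul_pow {𝕜 : Type*} [NormedField 𝕜] (r : ℕ) {z : 𝕜}
    (hz : ‖z‖ < 1) :
    HasSum (fun m : ℕ => ((m + r - 1).choose m : 𝕜) * z ^ m) ((1 - z) ^ r)⁻¹ := by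
  cases r with
  | zero =>
    -- truncated subtraction: for `r = 0` the coefficients are `1, 0, 0, …`
    convert hasSum_ite_eq (0 : ℕ) (1 : 𝕜) using 2 with m
    · rcases m with _ | m <;> simp
    · simp
  | succ k =>
    convert hasSum_choose_mul_geometric_of_norm_lt_one k hz using 2 with m
    · rw [show m + (k + 1) - 1 = m + k by omega, Nat.choose_symm_add]
    · rw [one_div]

theorem one_sub_rpow_natCast_add_pow {q : ℝ} (hq : 0 < q) (m : ℕ) (x : ℝ) (n : ℕ) :
    (1 - q ^ ((m : ℝ) + x)) ^ n =
      ∑ l ∈ range (n + 1), (n.choose l : ℝ) * (-1) ^ l * q ^ ((l : ℝ) * x) * (q ^ l) ^ m := by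
  rw [sub_eq_neg_add, add_pow]
  refine sum_congr rfl fun l _ => ?_
  rw [Real.rpow_add hq, Real.rpow_natCast, mul_comm (l : ℝ) x, Real.rpow_mul hq.le,
    Real.rpow_natCast, neg_pow, one_pow, mul_one]
  ring

noncomputable def qEulerSum (q x : ℝ) (n r : ℕ) (t : ℝ) : ℝ :=
  ((1 - q) ^ n)⁻¹ * ∑ l ∈ range (n + 1),
    (n.choose l : ℝ) * (-1) ^ l * q ^ ((l : ℝ) * x) * ((1 + t * q ^ l) ^ r)⁻¹

theorem hasSum_qEulerSum {q : ℝ} (hq0 : 0 < q) (hq1 : q ≤ 1) (x : ℝ) (n r : ℕ) {t : ℝ}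
    (ht : |t| < 1) :
    HasSum (fun m : ℕ => ((m + r - 1).choose m : ℝ) * (-1) ^ m * t ^ m *
      ((1 - q ^ ((m : ℝ) + x)) / (1 - q)) ^ n) (qEulerSum q x n r t) := by
  have hz : ∀ l : ℕ, ‖-(t * q ^ l)‖ < 1 := fun l => by
    rw [norm_neg, norm_mul, Real.norm_eq_abs, norm_pow, Real.norm_of_nonneg hq0.le]
    exact mul_lt_one_of_nonneg_of_lt_one_left (abs_nonneg t) ht (pow_le_one₀ hq0.le hq1)
  have hl := fun l (_ : l ∈ range (n + 1)) =>
    ((hasSum_choose_add_sub_one_mul_pow r (hz l)).mul_left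
      (((1 - q) ^ n)⁻¹ * ((n.choose l : ℝ) * (-1) ^ l * q ^ ((l : ℝ) * x))))
  have hvalue : qEulerSum q x n r t = ∑ l ∈ range (n + 1),
      ((1 - q) ^ n)⁻¹ * ((n.choose l : ℝ) * (-1) ^ l * q ^ ((l : ℝ) * x)) *
        ((1 - -(t * q ^ l)) ^ r)⁻¹ := by
    rw [qEulerSum, mul_sum]
    refine sum_congr rfl fun l _ => ?_
    rw [sub_neg_eq_add]
    ring
  rw [hvalue]
  refine (hasSum_sum hl).congr_fun fun m => ?_
  rw [div_pow, one_sub_rpow_natCast_add_pow hq0, div_eq_inv_mul, mul_sum, mul_sum]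
  refine sum_congr rfl fun l _ => ?_
  ring

theorem continuousAt_qEulerSum {q : ℝ} (hq : 0 ≤ q) (x : ℝ) (n r : ℕ) {t : ℝ} (ht : 0 ≤ t) :
    ContinuousAt (qEulerSum q x n r) t := by
  unfold qEulerSum
  fun_prop (disch := positivity)

theorem abel_limit_qEuler_general (q : ℝ) (hq0 : 0 < q) (hq1 : q < 1) (n : ℕ)
    (x : ℝ) (r : ℕ) :
    Filter.Tendsto
      (fun t : ℝ =>
        ∑' m : ℕ, ((m + r - 1).choose m : ℝ) * (-1) ^ m * t ^ m *
          ((1 - Real.rpow q ((m : ℝ) + x)) / (1 - q)) ^ n)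
      (nhdsWithin 1 (Set.Iio 1))
      (nhds (((1 - q) ^ n)⁻¹ *
        ∑ l ∈ Finset.range (n + 1),
          (n.choose l : ℝ) * (-1) ^ l * Real.rpow q ((l : ℝ) * x) *
            ((1 + q ^ l) ^ r)⁻¹)) := by
  have hseries : ∀ᶠ t in 𝓝[<] (1 : ℝ), qEulerSum q x n r t = ∑' m : ℕ,
      ((m + r - 1).choose m : ℝ) * (-1) ^ m * t ^ m *
        ((1 - Real.rpow q ((m : ℝ) + x)) / (1 - q)) ^ n := by
    filter_upwards [Ioo_mem_nhdsLT (show (0 : ℝ) < 1 by norm_num)] with t ht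
    exact ((hasSum_qEulerSum hq0 hq1.le x n r
      (abs_lt.2 ⟨by linarith [ht.1], ht.2⟩)).tsum_eq).symm
  have hlim := (continuousAt_qEulerSum hq0.le x n r zero_le_one).tendsto.mono_left
    (nhdsWithin_le_nhds (s := Set.Iio 1))
  simp only [qEulerSum, one_mul] at hlim
  exact hlim.congr' hseries

theorem abel_limit_qEuler (q : ℝ) (hq0 : 0 < q) (hq1 : q < 1) (n : ℕ)
    (x : ℝ) (hx : 0 < x) (r : ℕ) (hr : 1 ≤ r) :
    Filter.Tendsto
      (fun t : ℝ =>
        ∑' m : ℕ, ((m + r - 1).choose m : ℝ) * (-1) ^ m * t ^ m *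
          ((1 - Real.rpow q ((m : ℝ) + x)) / (1 - q)) ^ n)
      (nhdsWithin 1 (Set.Iio 1))
      (nhds (((1 - q) ^ n)⁻¹ *
        ∑ l ∈ Finset.range (n + 1),
          (n.choose l : ℝ) * (-1) ^ l * Real.rpow q ((l : ℝ) * x) *
            ((1 + q ^ l) ^ r)⁻¹)) :=
  abel_limit_qEuler_general q hq0 hq1 n x r
end
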